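/- The image of a sphere not centered on the optical axis under central projection onto a plane is in general an ellipse, not a circle: concretely, the central projection of the sphere of radius 1 centered at (d, 0, h) with h > 1 and d ≠ 0 onto the plane z = 1 is bounded by a conic that is not a circle. -/

import Mathlib

/-!
A line of sight through `p` is tangent to the sphere with centre `c` and radius `r` exactly when
`p ⬝ (p - c) = 0`; together with `|p - c|² = r²` this gives `p ⬝ c = |p|² = k` with
`k = |c|² - r²`. Hence the tangent points lie on the cone `(p ⬝ c)² = k |p|²` with vertex at the
eye, and cutting it with `z = 1` gives a conic whose `X²` and `Y²` coefficients are `k - d²` and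
`k` when `c = (d, 0, h)`: they differ as soon as `d ≠ 0`.
-/

section TangentCone

variable {a b c r x y z : ℝ}

theorem tangent_point_dot_center_eq
    (hsphere : (x - a) ^ 2 + (y - b) ^ 2 + (z - c) ^ 2 = r ^ 2)
    (htangent : x * (x - a) + y * (y - b) + z * (z - c) = 0) :
    a * x + b * y + c * z = a ^ 2 + b ^ 2 + c ^ 2 - r ^ 2 := by
  linear_combination htangent - hsphere

theorem tangent_point_sq_norm_eq
    (hsphere : (x - a) ^ 2 + (y - b) ^ 2 + (z - c) ^ 2 = r ^ 2)
    (htangent : x * (x - a) + y * (y - b) + z * (z - c) = 0) :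
    x ^ 2 + y ^ 2 + z ^ 2 = a ^ 2 + b ^ 2 + c ^ 2 - r ^ 2 := by
  linear_combination htangent + tangent_point_dot_center_eq hsphere htangent

theorem tangent_point_mem_cone
    (hsphere : (x - a) ^ 2 + (y - b) ^ 2 + (z - c) ^ 2 = r ^ 2)
    (htangent : x * (x - a) + y * (y - b) + z * (z - c) = 0) :
    (a * x + b * y + c * z) ^ 2 = (a ^ 2 + b ^ 2 + c ^ 2 - r ^ 2) * (x ^ 2 + y ^ 2 + z ^ 2) := by
  rw [tangent_point_sq_norm_eq hsphere htangent, tangent_point_dot_center_eq hsphere htangent]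
  ring

theorem tangent_point_projection_mem_conic (hz : z ≠ 0)
    (hsphere : (x - a) ^ 2 + (y - b) ^ 2 + (z - c) ^ 2 = r ^ 2)
    (htangent : x * (x - a) + y * (y - b) + z * (z - c) = 0) :
    (a * (x / z) + b * (y / z) + c) ^ 2 =
      (a ^ 2 + b ^ 2 + c ^ 2 - r ^ 2) * ((x / z) ^ 2 + (y / z) ^ 2 + 1) := by
  field_simp
  linear_combination tangent_point_mem_cone hsphere htangent

end TangentCone

theorem sphere_projects_to_noncircular_conic_general (d h : ℝ) (hd : d ≠ 0) :
    let k : ℝ := d ^ 2 + h ^ 2 - 1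
    (∀ x y z : ℝ, z ≠ 0 →
      (x - d) ^ 2 + y ^ 2 + (z - h) ^ 2 = 1 →
      x * (x - d) + y * y + z * (z - h) = 0 →
      (k - d ^ 2) * (x / z) ^ 2 + k * (y / z) ^ 2 - 2 * d * h * (x / z) + (k - h ^ 2) = 0) ∧
      k - d ^ 2 ≠ k := by
  intro k
  refine ⟨fun x y z hz hsphere htangent => ?_, by simpa using pow_ne_zero 2 hd⟩
  have hcone := tangent_point_projection_mem_conic (a := d) (b := 0) (c := h) (r := 1)
    (x := x) (y := y) hz (by linear_combination hsphere) (by linear_combination htangent)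
  linear_combination -hcone

/-- The silhouette of the unit sphere centered at (d, 0, h), h > 1, d ≠ 0, under central
projection onto z = 1 lies on a conic (k−d²)X² + kY² − 2dhX + (k−h²) = 0 with
k = d² + h² − 1, whose X² and Y² coefficients differ: it is not a circle. -/
theorem sphere_projects_to_noncircular_conic (d h : ℝ) (hh : 1 < h) (hd : d ≠ 0) :
    let k : ℝ := d ^ 2 + h ^ 2 - 1
    (∀ x y z : ℝ, z ≠ 0 →
      (x - d) ^ 2 + y ^ 2 + (z - h) ^ 2 = 1 →
      x * (x - d) + y * y + z * (z - h) = 0 →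
      (k - d ^ 2) * (x / z) ^ 2 + k * (y / z) ^ 2 - 2 * d * h * (x / z) + (k - h ^ 2) = 0) ∧
      k - d ^ 2 ≠ k :=
  sphere_projects_to_noncircular_conic_general d h hd
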